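/- Let γ : I → S² be C² unit-speed with det(γ,γ',γ'') nonvanishing, and fix θ_τ, θ ∈ I with ε := |θ_τ − θ| small. Let ξ = ξ₁γ(θ_τ) + ξ₂γ'(θ_τ) + ξ₃(γ×γ')(θ_τ) with 2^{j−2} ≤ |ξ₁| ≤ 2^{j+2}, |ξ₂| ≤ 2^{j/2}, |ξ₃| ≤ 1. If ε ≥ 2^{j(δ̃ − 1/2)} for some δ̃ > 0 and j is sufficiently large, then |⟨(γ×γ')(θ), ξ⟩| ≍ ε²2^j. -/

import Mathlib

open MeasureTheory Metric Set Filter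
open scoped ENNReal NNReal RealInnerProductSpace

noncomputable section

abbrev E3 : Type := EuclideanSpace ℝ (Fin 3)

/-- Cross product of two vectors in `ℝ³`. -/
def cross3 (u v : E3) : E3 :=
  WithLp.toLp 2 ![u 1 * v 2 - u 2 * v 1, u 2 * v 0 - u 0 * v 2, u 0 * v 1 - u 1 * v 0]

/-- Scalar triple product `det(u, v, w)`. -/
def det3 (u v w : E3) : ℝ := ⟪u, cross3 v w⟫

/-! Write `N = γ × γ'` and `ε = |θτ - θ|`. The function `t ↦ ⟪N θ, γ t⟫` vanishes to second
order at `t = θ`, and its second derivative `⟪N θ, γ'' η⟫` is close to `det(γ, γ', γ'')(η)`, which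
is bounded away from zero on the compact interval; Taylor's theorem with Lagrange remainder thus
gives `|⟪N θ, γ θτ⟫| ≍ ε²`, while `|⟪N θ, γ' θτ⟫| = O(ε)` and `|⟪N θ, N θτ⟫| = O(1)`. With
`λ = 2^{j/2} ε ≥ 2^{jδ'}`, the `ξ₁`-term has size `≍ λ²` and the other two are `O(λ)`, so the
first one dominates once `j` is large. -/

lemma real_inner_E3 (u v : E3) : ⟪u, v⟫ = u 0 * v 0 + u 1 * v 1 + u 2 * v 2 := by
  simp only [PiLp.inner_apply, RCLike.inner_apply, Real.ringHom_apply, Fin.sum_univ_three]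
  ring

lemma inner_cross3_self_left (u v : E3) : ⟪cross3 u v, u⟫ = 0 := by
  simp only [cross3, real_inner_E3, Matrix.cons_val_zero, Matrix.cons_val_one, Matrix.cons_val]
  ring

lemma inner_cross3_self_right (u v : E3) : ⟪cross3 u v, v⟫ = 0 := by
  simp only [cross3, real_inner_E3, Matrix.cons_val_zero, Matrix.cons_val_one, Matrix.cons_val]
  ring

lemma det3_eq_inner_cross3 (u v w : E3) : det3 u v w = ⟪cross3 u v, w⟫ := by
  simp only [det3, cross3, real_inner_E3, Matrix.cons_val_zero, Matrix.cons_val_one,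
    Matrix.cons_val]
  ring

lemma Continuous.cross3 {X : Type*} [TopologicalSpace X] {u v : X → E3} (hu : Continuous u)
    (hv : Continuous v) : Continuous fun x => cross3 (u x) (v x) := by
  unfold _root_.cross3; fun_prop

lemma abs_sub_left_lt_of_mem_uIoo {x y z : ℝ} (h : z ∈ uIoo x y) : |z - x| < |y - x| := by
  grind [uIoo, abs_lt]

lemma IsCompact.exists_pos_bound_of_continuousOn {X E : Type*} [TopologicalSpace X]
    [SeminormedAddCommGroup E] {K : Set X} (hK : IsCompact K) {f : X → E}
    (hf : ContinuousOn f K) : ∃ C > 0, ∀ x ∈ K, ‖f x‖ ≤ C := by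
  obtain ⟨C, hC⟩ := hK.exists_bound_of_continuousOn hf
  exact ⟨max C 1, by positivity, fun x hx => (hC x hx).trans (le_max_left _ _)⟩

lemma half_le_abs_inner_of_norm_sub_mul_le {F : Type*} [NormedAddCommGroup F]
    [InnerProductSpace ℝ F] {u w z : F} {d : ℝ} (hu : d ≤ |⟪u, z⟫|)
    (hw : ‖w - u‖ * ‖z‖ ≤ d / 2) : d / 2 ≤ |⟪w, z⟫| := by
  have h : |⟪w - u, z⟫| ≤ d / 2 := (abs_real_inner_le_norm _ _).trans hw
  rw [inner_sub_left] at h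
  linarith [abs_sub_abs_le_abs_sub ⟪u, z⟫ ⟪w, z⟫, abs_sub_comm ⟪w, z⟫ ⟪u, z⟫]

lemma exists_mem_uIoo_eq_taylor_two {f : ℝ → ℝ} (hf : ContDiff ℝ 2 f) {x₀ x : ℝ}
    (hx : x₀ ≠ x) : ∃ η ∈ uIoo x₀ x,
      f x = f x₀ + deriv f x₀ * (x - x₀) + deriv (deriv f) η * (x - x₀) ^ 2 / 2 := by
  obtain ⟨η, hη, h⟩ := taylor_mean_remainder_lagrange_iteratedDeriv (n := 1) hx hf.contDiffOn
  have hderiv : derivWithin f (uIcc x₀ x) x₀ = deriv f x₀ :=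
    ((hf.differentiable two_ne_zero) x₀).derivWithin (uniqueDiffOn_uIcc hx x₀ left_mem_uIcc)
  refine ⟨η, hη, ?_⟩
  norm_num [iteratedDeriv_succ, hderiv] at h
  linarith

section Curve

variable {γ : ℝ → E3}

lemma deriv_inner_const_left {v : E3} {g : ℝ → E3} (hg : Differentiable ℝ g) :
    deriv (fun t => ⟪v, g t⟫) = fun t => ⟪v, deriv g t⟫ :=
  funext fun t => ((hasDerivAt_const t v).inner ℝ (hg t).hasDerivAt).deriv.trans (by simp)

lemma exists_mem_uIoo_inner_cross3_eq (hγ : ContDiff ℝ 2 γ) {θ θτ : ℝ} (h : θ ≠ θτ) :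
    ∃ η ∈ uIoo θ θτ, ⟪cross3 (γ θ) (deriv γ θ), γ θτ⟫ =
      ⟪cross3 (γ θ) (deriv γ θ), deriv (deriv γ) η⟫ * (θτ - θ) ^ 2 / 2 := by
  have h0 : ⟪cross3 (γ θ) (deriv γ θ), γ θ⟫ = 0 := inner_cross3_self_left _ _
  have h1 : ⟪cross3 (γ θ) (deriv γ θ), deriv γ θ⟫ = 0 := inner_cross3_self_right _ _
  have hd1 := deriv_inner_const_left (v := cross3 (γ θ) (deriv γ θ))
    (hγ.differentiable two_ne_zero)
  have hd2 := deriv_inner_const_left (v := cross3 (γ θ) (deriv γ θ))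
    ((hγ.deriv' (n := 1)).differentiable one_ne_zero)
  obtain ⟨η, hη, heq⟩ := exists_mem_uIoo_eq_taylor_two (contDiff_const.inner ℝ hγ) h
  refine ⟨η, hη, ?_⟩
  rw [heq, hd1, hd2]
  simp only [h0, h1]
  ring

lemma abs_inner_cross3_deriv_le (hγ : ContDiff ℝ 2 γ) {M θ θτ : ℝ}
    (hM : ∀ t ∈ uIcc θ θτ, ‖deriv (deriv γ) t‖ ≤ M) :
    |⟪cross3 (γ θ) (deriv γ θ), deriv γ θτ⟫| ≤ ‖cross3 (γ θ) (deriv γ θ)‖ * (M * |θτ - θ|) := by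
  have hlip : ‖deriv γ θτ - deriv γ θ‖ ≤ M * |θτ - θ| :=
    Convex.norm_image_sub_le_of_norm_deriv_le
      (fun t _ => ((hγ.deriv' (n := 1)).differentiable one_ne_zero) t) hM
      (convex_uIcc θ θτ) left_mem_uIcc right_mem_uIcc
  have htangent : ⟪cross3 (γ θ) (deriv γ θ), deriv γ θτ⟫ =
      ⟪cross3 (γ θ) (deriv γ θ), deriv γ θτ - deriv γ θ⟫ := by
    rw [inner_sub_right, inner_cross3_self_right, sub_zero]
  rw [htangent]
  exact (abs_real_inner_le_norm _ _).trans (by gcongr)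

lemma exists_bounds_inner_cross3 {a b : ℝ} (hγ : ContDiff ℝ 2 γ)
    (hdet : ∀ θ ∈ Icc a b, det3 (γ θ) (deriv γ θ) (deriv (deriv γ) θ) ≠ 0) :
    ∃ r > (0 : ℝ), ∃ c > (0 : ℝ), ∃ K ≥ (0 : ℝ), ∀ θτ ∈ Icc a b, ∀ θ ∈ Icc a b, θτ ≠ θ →
      |θτ - θ| ≤ r →
      c * |θτ - θ| ^ 2 ≤ |⟪cross3 (γ θ) (deriv γ θ), γ θτ⟫| ∧
      |⟪cross3 (γ θ) (deriv γ θ), γ θτ⟫| ≤ K * |θτ - θ| ^ 2 ∧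
      |⟪cross3 (γ θ) (deriv γ θ), deriv γ θτ⟫| ≤ K * |θτ - θ| ∧
      |⟪cross3 (γ θ) (deriv γ θ), cross3 (γ θτ) (deriv γ θτ)⟫| ≤ K := by
  have hγ' : ContDiff ℝ 1 (deriv γ) := hγ.deriv'
  have hγ'' : Continuous (deriv (deriv γ)) := hγ'.continuous_deriv le_rfl
  have hN : Continuous fun t => cross3 (γ t) (deriv γ t) := hγ.continuous.cross3 hγ'.continuous
  obtain ⟨M, hM, hγ''M⟩ := isCompact_Icc.exists_pos_bound_of_continuousOn hγ''.continuousOn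
  obtain ⟨B, hB, hNB⟩ := isCompact_Icc.exists_pos_bound_of_continuousOn hN.continuousOn
  obtain ⟨d, hd, hdet_ge⟩ := isCompact_Icc.exists_forall_le' (hN.inner hγ'').abs.continuousOn
    (a := 0) fun t ht => abs_pos.2 (by rw [← det3_eq_inner_cross3]; exact hdet t ht)
  obtain ⟨r, hr, hNr⟩ := Metric.uniformContinuousOn_iff.1
    (isCompact_Icc.uniformContinuousOn_of_continuous hN.continuousOn) (d / (2 * M))
    (by positivity)
  refine ⟨r, hr, d / 4, by positivity, B * M + B * B, by positivity, ?_⟩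
  intro θτ hθτ θ hθ hne hεr
  have hsub : uIcc θ θτ ⊆ Icc a b := ordConnected_Icc.uIcc_subset hθ hθτ
  obtain ⟨η, hη, heq⟩ := exists_mem_uIoo_inner_cross3_eq hγ hne.symm
  have hηK : η ∈ Icc a b := hsub (uIoo_subset_uIcc_self hη)
  have hNη : ‖cross3 (γ θ) (deriv γ θ) - cross3 (γ η) (deriv γ η)‖ ≤ d / (2 * M) := by
    rw [← dist_eq_norm]
    refine (hNr θ hθ η hηK ?_).le
    rw [dist_comm, Real.dist_eq]
    exact (abs_sub_left_lt_of_mem_uIoo hη).trans_le hεr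
  -- by uniform continuity of `γ × γ'`, `(γ × γ')(θ)` is close to `(γ × γ')(η)`, and
  -- `⟪(γ × γ')(η), γ''(η)⟫ = det(γ, γ', γ'')(η)` is bounded away from zero
  have hlow : d / 2 ≤ |⟪cross3 (γ θ) (deriv γ θ), deriv (deriv γ) η⟫| := by
    refine half_le_abs_inner_of_norm_sub_mul_le (hdet_ge η hηK) ?_
    calc _ ≤ d / (2 * M) * M := mul_le_mul hNη (hγ''M η hηK) (norm_nonneg _) (by positivity)
      _ = d / 2 := by field_simp
  have hup : |⟪cross3 (γ θ) (deriv γ θ), deriv (deriv γ) η⟫| ≤ B * M :=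
    (abs_real_inner_le_norm _ _).trans
      (mul_le_mul (hNB θ hθ) (hγ''M η hηK) (norm_nonneg _) hB.le)
  have hnormal : |⟪cross3 (γ θ) (deriv γ θ), γ θτ⟫| =
      |⟪cross3 (γ θ) (deriv γ θ), deriv (deriv γ) η⟫| * |θτ - θ| ^ 2 / 2 := by
    rw [heq, abs_div, abs_mul, abs_pow, abs_two]
  have hε : 0 ≤ |θτ - θ| := abs_nonneg _
  refine ⟨by rw [hnormal]; nlinarith, by rw [hnormal]; nlinarith, ?_, ?_⟩
  · calc _ ≤ B * (M * |θτ - θ|) :=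
          (abs_inner_cross3_deriv_le hγ fun t ht => hγ''M t (hsub ht)).trans
            (by gcongr; exact hNB θ hθ)
      _ ≤ (B * M + B * B) * |θτ - θ| := by nlinarith
  · calc _ ≤ B * B := (abs_real_inner_le_norm _ _).trans
            (mul_le_mul (hNB θ hθ) (hNB θτ hθτ) (norm_nonneg _) hB.le)
      _ ≤ B * M + B * B := by nlinarith

end Curve

lemma bounds_abs_add_add_of_dominant {c K ε p q ξ₁ ξ₂ ξ₃ x y z : ℝ} (hc : 0 < c)
    (hqp : q ^ 2 = p) (hscale₁ : 1 ≤ q * ε) (hscale₂ : 16 * K ≤ c * (q * ε))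
    (hx : c * ε ^ 2 ≤ |x|) (hx' : |x| ≤ K * ε ^ 2) (hy : |y| ≤ K * ε) (hz : |z| ≤ K)
    (hξ₁ : p / 4 ≤ |ξ₁|) (hξ₁' : |ξ₁| ≤ 4 * p) (hξ₂ : |ξ₂| ≤ q) (hξ₃ : |ξ₃| ≤ 1) :
    c / 8 * ε ^ 2 * p ≤ |ξ₁ * x + ξ₂ * y + ξ₃ * z| ∧
      |ξ₁ * x + ξ₂ * y + ξ₃ * z| ≤ (4 * K + c) * ε ^ 2 * p := by
  have hp : ε ^ 2 * p = (q * ε) ^ 2 := by rw [← hqp]; ring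
  have hK : 0 ≤ K := (abs_nonneg z).trans hz
  have hmain_ge : c / 4 * (q * ε) ^ 2 ≤ |ξ₁ * x| := by
    rw [abs_mul, ← hp]
    nlinarith [mul_le_mul hξ₁ hx (mul_nonneg hc.le (sq_nonneg ε)) (abs_nonneg _)]
  have hmain_le : |ξ₁ * x| ≤ 4 * K * (q * ε) ^ 2 := by
    rw [abs_mul, ← hp]
    nlinarith [mul_le_mul hξ₁' hx' (abs_nonneg _) (by rw [← hqp]; positivity : (0 : ℝ) ≤ 4 * p)]
  -- the error terms are `O(q ε)` while the main term is of order `(q ε)²`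
  have herr : |ξ₂ * y| + |ξ₃ * z| ≤ c / 8 * (q * ε) ^ 2 := by
    rw [abs_mul, abs_mul]
    nlinarith [mul_le_mul hξ₂ hy (abs_nonneg _) ((abs_nonneg _).trans hξ₂),
      mul_le_mul hξ₃ hz (abs_nonneg _) zero_le_one]
  have htri := abs_add_three (ξ₁ * x) (ξ₂ * y) (ξ₃ * z)
  have htri' := abs_add_three (ξ₁ * x + ξ₂ * y + ξ₃ * z) (-(ξ₂ * y)) (-(ξ₃ * z))
  rw [abs_neg, abs_neg, show ξ₁ * x + ξ₂ * y + ξ₃ * z + -(ξ₂ * y) + -(ξ₃ * z) = ξ₁ * x by ring]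
    at htri'
  rw [mul_assoc, mul_assoc, hp]
  constructor <;> nlinarith

lemma exists_forall_le_two_rpow_mul {δ : ℝ} (hδ : 0 < δ) (T : ℝ) :
    ∃ J₀ : ℕ, ∀ j ≥ J₀, T ≤ (2 : ℝ) ^ ((j : ℝ) * δ) := by
  have hbase : (1 : ℝ) < 2 ^ δ := Real.one_lt_rpow one_lt_two hδ
  obtain ⟨J₀, hJ₀⟩ := eventually_atTop.1
    ((tendsto_pow_atTop_atTop_of_one_lt hbase).eventually_ge_atTop T)
  refine ⟨J₀, fun j hj => (hJ₀ j hj).trans_eq ?_⟩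
  rw [← Real.rpow_natCast, ← Real.rpow_mul zero_le_two, mul_comm]

lemma two_rpow_mul_le_of_two_rpow_mul_sub_half_le {j δ ε : ℝ}
    (h : (2 : ℝ) ^ (j * (δ - 1 / 2)) ≤ ε) : (2 : ℝ) ^ (j * δ) ≤ 2 ^ (j / 2) * ε := by
  calc (2 : ℝ) ^ (j * δ) = 2 ^ (j / 2) * 2 ^ (j * (δ - 1 / 2)) := by
        rw [← Real.rpow_add two_pos]; ring_nf
    _ ≤ 2 ^ (j / 2) * ε := by gcongr

theorem stmt18_general (a b : ℝ) (γ : ℝ → E3)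
    (hγ : ContDiff ℝ 2 γ)
    (hdet : ∀ θ ∈ Icc a b, det3 (γ θ) (deriv γ θ) (deriv (deriv γ) θ) ≠ 0)
    (δ' : ℝ) (hδ' : 0 < δ') :
    ∃ r > (0 : ℝ), ∃ c C : ℝ, 0 < c ∧ c ≤ C ∧ ∃ J₀ : ℕ,
      ∀ j : ℕ, J₀ ≤ j →
      ∀ θτ ∈ Icc a b, ∀ θ ∈ Icc a b,
        (2 : ℝ) ^ ((j : ℝ) * (δ' - 1 / 2)) ≤ |θτ - θ| → |θτ - θ| ≤ r →
        ∀ ξ₁ ξ₂ ξ₃ : ℝ,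
          (2 : ℝ) ^ ((j : ℝ) - 2) ≤ |ξ₁| → |ξ₁| ≤ (2 : ℝ) ^ ((j : ℝ) + 2) →
          |ξ₂| ≤ (2 : ℝ) ^ ((j : ℝ) / 2) → |ξ₃| ≤ 1 →
          c * |θτ - θ| ^ 2 * (2 : ℝ) ^ (j : ℝ) ≤
              |⟪cross3 (γ θ) (deriv γ θ),
                 ξ₁ • γ θτ + ξ₂ • deriv γ θτ + ξ₃ • cross3 (γ θτ) (deriv γ θτ)⟫| ∧
          |⟪cross3 (γ θ) (deriv γ θ),
             ξ₁ • γ θτ + ξ₂ • deriv γ θτ + ξ₃ • cross3 (γ θτ) (deriv γ θτ)⟫| ≤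
            C * |θτ - θ| ^ 2 * (2 : ℝ) ^ (j : ℝ) := by
  obtain ⟨r, hr, c, hc, K, hK, hbounds⟩ := exists_bounds_inner_cross3 hγ hdet
  obtain ⟨J₀, hJ₀⟩ := exists_forall_le_two_rpow_mul hδ' (max 1 (16 * K / c))
  refine ⟨r, hr, c / 8, 4 * K + c, by positivity, by linarith, J₀, ?_⟩
  intro j hj θτ hθτ θ hθ hεlow hεr ξ₁ ξ₂ ξ₃ hξ₁ hξ₁' hξ₂ hξ₃
  have hscale : max 1 (16 * K / c) ≤ 2 ^ ((j : ℝ) / 2) * |θτ - θ| :=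
    (hJ₀ j hj).trans (two_rpow_mul_le_of_two_rpow_mul_sub_half_le hεlow)
  have hne : θτ ≠ θ := sub_ne_zero.1 (abs_pos.1 ((Real.rpow_pos_of_pos two_pos _).trans_le hεlow))
  obtain ⟨hx, hx', hy, hz⟩ := hbounds θτ hθτ θ hθ hne hεr
  rw [Real.rpow_sub two_pos, Real.rpow_two] at hξ₁
  rw [Real.rpow_add two_pos, Real.rpow_two] at hξ₁'
  simp only [inner_add_right, real_inner_smul_right]
  refine bounds_abs_add_add_of_dominant hc ?_ ((le_max_left _ _).trans hscale)
    ((div_le_iff₀' hc).1 ((le_max_right _ _).trans hscale)) hx hx' hy hz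
    (by linarith) (by linarith) hξ₂ hξ₃
  rw [← Real.rpow_natCast, ← Real.rpow_mul zero_le_two]
  norm_num

/-- Key oscillation estimate: for `ξ = ξ₁γ(θ_τ) + ξ₂γ'(θ_τ) + ξ₃(γ×γ')(θ_τ)` with
`2^{j−2} ≤ |ξ₁| ≤ 2^{j+2}`, `|ξ₂| ≤ 2^{j/2}`, `|ξ₃| ≤ 1`, and `ε = |θ_τ − θ|` satisfying
`2^{j(δ̃−1/2)} ≤ ε ≤ r` with `j` sufficiently large, one has `|⟨(γ×γ')(θ), ξ⟩| ≍ ε²2^j`. -/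
theorem stmt18 (a b : ℝ) (hab : a ≤ b) (γ : ℝ → E3)
    (hγ : ContDiff ℝ 2 γ)
    (hsphere : ∀ θ ∈ Icc a b, ‖γ θ‖ = 1)
    (hunit : ∀ θ ∈ Icc a b, ‖deriv γ θ‖ = 1)
    (hdet : ∀ θ ∈ Icc a b, det3 (γ θ) (deriv γ θ) (deriv (deriv γ) θ) ≠ 0)
    (δ' : ℝ) (hδ' : 0 < δ') (hδ'2 : δ' < 1 / 2) :
    ∃ r > (0 : ℝ), ∃ c C : ℝ, 0 < c ∧ c ≤ C ∧ ∃ J₀ : ℕ,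
      ∀ j : ℕ, J₀ ≤ j →
      ∀ θτ ∈ Icc a b, ∀ θ ∈ Icc a b,
        (2 : ℝ) ^ ((j : ℝ) * (δ' - 1 / 2)) ≤ |θτ - θ| → |θτ - θ| ≤ r →
        ∀ ξ₁ ξ₂ ξ₃ : ℝ,
          (2 : ℝ) ^ ((j : ℝ) - 2) ≤ |ξ₁| → |ξ₁| ≤ (2 : ℝ) ^ ((j : ℝ) + 2) →
          |ξ₂| ≤ (2 : ℝ) ^ ((j : ℝ) / 2) → |ξ₃| ≤ 1 →
          c * |θτ - θ| ^ 2 * (2 : ℝ) ^ (j : ℝ) ≤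
              |⟪cross3 (γ θ) (deriv γ θ),
                 ξ₁ • γ θτ + ξ₂ • deriv γ θτ + ξ₃ • cross3 (γ θτ) (deriv γ θτ)⟫| ∧
          |⟪cross3 (γ θ) (deriv γ θ),
             ξ₁ • γ θτ + ξ₂ • deriv γ θτ + ξ₃ • cross3 (γ θτ) (deriv γ θτ)⟫| ≤
            C * |θτ - θ| ^ 2 * (2 : ℝ) ^ (j : ℝ) :=
  stmt18_general a b γ hγ hdet δ' hδ'
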